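/- arXiv:1503.04995 — 7 statements merged into one kernel-verified Lean document; each statement's English description precedes it below -/
import Mathlib

section
/- For every pair of unit vectors z₁, z₂ ∈ S² and every ε > 0 there exist ρ > 0 and a twice continuously differentiable map u : ℝ → ℝ³ with ‖u(t)‖ = 1 for all t ∈ ℝ such that the associated chirality w(t) := u(t) × u'(t) satisfies: w(t) = z₁ for every t ≤ 0, w(t) = z₂ for every t ≥ ρ, and ∫_ℝ [(‖w(t)‖² − 1)² + ‖w'(t)‖²] dt ≤ ε. (Hence the optimal transition energy g(z₁,z₂) between any two chiralities of an S²-valued spin chain is zero.) -/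
open MeasureTheory Filter
open scoped RealInnerProductSpace

noncomputable def cross3 (a b : EuclideanSpace ℝ (Fin 3)) : EuclideanSpace ℝ (Fin 3) :=
  (WithLp.equiv 2 (Fin 3 → ℝ)).symm
    (crossProduct ((WithLp.equiv 2 (Fin 3 → ℝ)) a) ((WithLp.equiv 2 (Fin 3 → ℝ)) b))

/-!
Take a unit vector `e ⊥ z₁`, an axis `n` whose half-turn maps `z₁` to `z₂`, and the spin
`u(t) = R_n(θ t) R_{z₁}(t) e`, where `R_a(φ)` is the rotation by `φ` about `a`. The circle
`t ↦ R_{z₁}(t) e` has chirality `z₁`, and rotations commute with the cross product, so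
`w = R_n(θ) z₁ + θ' u × (n × u)`: it equals `z₁` while `θ ≡ 0` and `z₂` once `θ ≡ π`.
For `θ(t) = π σ(t / ρ)` with a smooth step `σ`, both `‖w‖² - 1` and `w' = u × u''` are
`O(1/ρ)` and vanish off `[0, ρ]`, so the energy is `O(1/ρ)`.
-/

open Real

local notation "ℝ³" => EuclideanSpace ℝ (Fin 3)
local infixl:74 " ⨯₃ " => cross3

lemma ofLp_cross3 (a b : ℝ³) : (a ⨯₃ b).ofLp = crossProduct a.ofLp b.ofLp := rfl

lemma inner_eq_dotProduct_ofLp (a b : ℝ³) : ⟪a, b⟫ = a.ofLp ⬝ᵥ b.ofLp := by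
  simp [EuclideanSpace.inner_eq_star_dotProduct, dotProduct_comm]

@[simp] lemma zero_cross3 (a : ℝ³) : 0 ⨯₃ a = 0 := by
  simp [cross3]

lemma cross3_self (a : ℝ³) : a ⨯₃ a = 0 := by
  simp [cross3, cross_self]

lemma inner_self_cross3 (a b : ℝ³) : ⟪a, a ⨯₃ b⟫ = 0 := by
  rw [inner_eq_dotProduct_ofLp, ofLp_cross3, dot_self_cross]

lemma inner_cross3_self (a b : ℝ³) : ⟪b, a ⨯₃ b⟫ = 0 := by
  rw [inner_eq_dotProduct_ofLp, ofLp_cross3, dot_cross_self]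

lemma cross3_cross3 (a b c : ℝ³) : a ⨯₃ (b ⨯₃ c) = ⟪a, c⟫ • b - ⟪a, b⟫ • c := by
  apply (WithLp.equiv 2 _).injective
  simp [ofLp_cross3, cross_cross_eq_smul_sub_smul', inner_eq_dotProduct_ofLp, dotProduct_comm]

lemma leibniz_cross3 (a b c : ℝ³) : a ⨯₃ (b ⨯₃ c) = a ⨯₃ b ⨯₃ c + b ⨯₃ (a ⨯₃ c) := by
  apply (WithLp.equiv 2 _).injective
  simp only [WithLp.equiv_apply, ofLp_cross3, WithLp.ofLp_add]
  exact leibniz_cross _ _ _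

lemma norm_cross3_sq (a b : ℝ³) : ‖a ⨯₃ b‖ ^ 2 = ‖a‖ ^ 2 * ‖b‖ ^ 2 - ⟪a, b⟫ ^ 2 := by
  simp only [← real_inner_self_eq_norm_sq, inner_eq_dotProduct_ofLp, ofLp_cross3, cross_dot_cross,
    dotProduct_comm b.ofLp a.ofLp]
  ring

lemma norm_cross3_le (a b : ℝ³) : ‖a ⨯₃ b‖ ≤ ‖a‖ * ‖b‖ := by
  refine le_of_pow_le_pow_left₀ two_ne_zero (by positivity) ?_
  rw [mul_pow, norm_cross3_sq]
  nlinarith [sq_nonneg ⟪a, b⟫]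

lemma norm_cross3_le_of_norm_eq_one {a : ℝ³} (ha : ‖a‖ = 1) (b : ℝ³) : ‖a ⨯₃ b‖ ≤ ‖b‖ := by
  simpa [ha] using norm_cross3_le a b

noncomputable def crossL : ℝ³ →L[ℝ] ℝ³ →L[ℝ] ℝ³ :=
  LinearMap.mkContinuous₂ (LinearMap.mk₂ ℝ cross3 (fun a b c => by simp [cross3])
    (fun r a b => by simp [cross3]) (fun a b c => by simp [cross3]) (fun r a b => by simp [cross3]))
    1 (fun a b => by simpa using norm_cross3_le a b)

@[simp] lemma crossL_apply (a b : ℝ³) : crossL a b = a ⨯₃ b := rfl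

lemma cross3_add_right (a b c : ℝ³) : a ⨯₃ (b + c) = a ⨯₃ b + a ⨯₃ c := (crossL a).map_add b c
lemma cross3_sub_right (a b c : ℝ³) : a ⨯₃ (b - c) = a ⨯₃ b - a ⨯₃ c := (crossL a).map_sub b c
lemma cross3_neg_right (a b : ℝ³) : a ⨯₃ -b = -(a ⨯₃ b) := (crossL a).map_neg b
lemma cross3_smul_right (r : ℝ) (a b : ℝ³) : a ⨯₃ (r • b) = r • (a ⨯₃ b) := (crossL a).map_smul r b

lemma HasDerivAt.cross3 {a b : ℝ → ℝ³} {a' b' : ℝ³} {t : ℝ} (ha : HasDerivAt a a' t)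
    (hb : HasDerivAt b b' t) : HasDerivAt (fun s => a s ⨯₃ b s) (a' ⨯₃ b t + a t ⨯₃ b') t := by
  simpa using (crossL.hasFDerivAt.comp_hasDerivAt t ha).clm_apply hb

section Rotation

variable {n : ℝ³}

/-- Rodrigues' formula for the rotation by `θ` about the unit axis `n`. -/
noncomputable def axisRotation (n : ℝ³) (θ : ℝ) : ℝ³ →L[ℝ] ℝ³ :=
  1 + sin θ • crossL n + (1 - cos θ) • (crossL n * crossL n)

lemma axisRotation_apply (θ : ℝ) (v : ℝ³) :
    axisRotation n θ v = v + sin θ • (n ⨯₃ v) + (1 - cos θ) • (n ⨯₃ (n ⨯₃ v)) := rfl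

@[simp] lemma axisRotation_zero : axisRotation n 0 = 1 := by
  ext1 v
  simp [axisRotation_apply]

lemma cross3_cross3_self (hn : ‖n‖ = 1) (v : ℝ³) : n ⨯₃ (n ⨯₃ v) = ⟪n, v⟫ • n - v := by
  rw [cross3_cross3, real_inner_self_eq_norm_sq, hn, one_pow, one_smul]

lemma axisRotation_pi_apply (hn : ‖n‖ = 1) (v : ℝ³) :
    axisRotation n π v = (2 * ⟪n, v⟫) • n - v := by
  rw [axisRotation_apply, sin_pi, cos_pi, cross3_cross3_self hn]
  module

lemma contDiff_axisRotation : ContDiff ℝ ⊤ (axisRotation n) := by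
  unfold axisRotation
  fun_prop

lemma hasDerivAt_axisRotation (hn : ‖n‖ = 1) (θ : ℝ) :
    HasDerivAt (axisRotation n) (crossL n * axisRotation n θ) θ := by
  refine (((hasDerivAt_const θ (1 : ℝ³ →L[ℝ] ℝ³)).add ((hasDerivAt_sin θ).smul_const
    (crossL n))).add (((hasDerivAt_const θ (1 : ℝ)).sub (hasDerivAt_cos θ)).smul_const
    (crossL n * crossL n))).congr_deriv ?_
  ext1 v
  simp only [add_apply, smul_apply, mul_apply_eq_comp, zero_apply, crossL_apply,
    axisRotation_apply, cross3_add_right, cross3_sub_right, cross3_smul_right, cross3_self,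
    cross3_cross3_self hn]
  module

lemma hasDerivAt_axisRotation_apply (hn : ‖n‖ = 1) {θ : ℝ → ℝ} {v : ℝ → ℝ³} {θ' t : ℝ}
    {v' : ℝ³} (hθ : HasDerivAt θ θ' t) (hv : HasDerivAt v v' t) :
    HasDerivAt (fun s => axisRotation n (θ s) (v s))
      (θ' • (n ⨯₃ axisRotation n (θ t) (v t)) + axisRotation n (θ t) v') t := by
  simpa using ((hasDerivAt_axisRotation hn (θ t)).scomp t hθ).clm_apply hv

lemma hasDerivAt_axisRotation_apply_const (hn : ‖n‖ = 1) (θ : ℝ) (v : ℝ³) :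
    HasDerivAt (fun θ => axisRotation n θ v) (n ⨯₃ axisRotation n θ v) θ := by
  simpa using (hasDerivAt_axisRotation hn θ).clm_apply (hasDerivAt_const θ v)

lemma norm_eq_of_hasDerivAt_eq_cross3 {x : ℝ → ℝ³} (hx : ∀ t, HasDerivAt x (n ⨯₃ x t) t)
    (t : ℝ) : ‖x t‖ = ‖x 0‖ := by
  have hsq : ∀ t, HasDerivAt (fun s => ‖x s‖ ^ 2) 0 t := fun t => by
    simpa [inner_cross3_self] using (hx t).norm_sq
  have := is_const_of_deriv_eq_zero (fun t => (hsq t).differentiableAt) (fun t => (hsq t).deriv)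
    t 0
  exact (pow_left_inj₀ (norm_nonneg _) (norm_nonneg _) two_ne_zero).mp this

lemma norm_axisRotation_apply (hn : ‖n‖ = 1) (θ : ℝ) (v : ℝ³) : ‖axisRotation n θ v‖ = ‖v‖ := by
  simpa using norm_eq_of_hasDerivAt_eq_cross3 (hasDerivAt_axisRotation_apply_const hn · v) θ

/-- The defect `R a × R b - R (a × b)` solves `x' = n × x` by the Leibniz rule and vanishes at
`θ = 0`, while solutions of `x' = n × x` have constant norm. -/
lemma axisRotation_cross3 (hn : ‖n‖ = 1) (θ : ℝ) (a b : ℝ³) :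
    axisRotation n θ a ⨯₃ axisRotation n θ b = axisRotation n θ (a ⨯₃ b) := by
  have hR := hasDerivAt_axisRotation_apply_const hn
  have hx (θ : ℝ) : HasDerivAt
      (fun θ => axisRotation n θ a ⨯₃ axisRotation n θ b - axisRotation n θ (a ⨯₃ b))
      (n ⨯₃ (axisRotation n θ a ⨯₃ axisRotation n θ b - axisRotation n θ (a ⨯₃ b))) θ := by
    refine (((hR θ a).cross3 (hR θ b)).sub (hR θ (a ⨯₃ b))).congr_deriv ?_
    rw [cross3_sub_right, leibniz_cross3 n]
  simpa [sub_eq_zero] using norm_eq_of_hasDerivAt_eq_cross3 hx θ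

lemma inner_axisRotation_apply (θ : ℝ) (v : ℝ³) : ⟪n, axisRotation n θ v⟫ = ⟪n, v⟫ := by
  simp [axisRotation_apply, inner_add_right, inner_smul_right, inner_self_cross3]

end Rotation

lemma exists_norm_eq_one_inner_eq_zero {E : Type*} [NormedAddCommGroup E] [InnerProductSpace ℝ E]
    [FiniteDimensional ℝ E] (hE : 1 < Module.finrank ℝ E) (z : E) :
    ∃ e : E, ‖e‖ = 1 ∧ ⟪z, e⟫ = 0 := by
  have hne : (ℝ ∙ z)ᗮ ≠ ⊥ := by
    intro h
    have := (ℝ ∙ z).finrank_add_finrank_orthogonal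
    rw [h, finrank_bot, add_zero] at this
    have : Module.finrank ℝ (ℝ ∙ z) ≤ 1 := (finrank_span_le_card ({z} : Set E)).trans (by simp)
    omega
  obtain ⟨v, hv, hv0⟩ := Submodule.ne_bot_iff _ |>.mp hne
  exact ⟨(‖v‖⁻¹ : ℝ) • v, norm_smul_inv_norm hv0,
    Submodule.inner_right_of_mem_orthogonal (Submodule.mem_span_singleton_self z)
      (Submodule.smul_mem _ _ hv)⟩

lemma exists_axisRotation_pi_eq {z₁ z₂ : ℝ³} (hz₁ : ‖z₁‖ = 1) (hz₂ : ‖z₂‖ = 1) :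
    ∃ n : ℝ³, ‖n‖ = 1 ∧ axisRotation n π z₁ = z₂ := by
  by_cases hopp : z₁ + z₂ = 0
  · obtain ⟨e, he, hz₁e⟩ := exists_norm_eq_one_inner_eq_zero (by simp) z₁
    refine ⟨e, he, ?_⟩
    rw [axisRotation_pi_apply he, real_inner_comm, hz₁e, eq_neg_of_add_eq_zero_right hopp]
    simp
  · -- the half-turn about the bisector of `z₁` and `z₂`
    set s := z₁ + z₂
    have hs : ‖s‖ ≠ 0 := norm_ne_zero_iff.mpr hopp
    have hsz : ⟪s, z₁⟫ = ‖s‖ ^ 2 / 2 := by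
      rw [inner_add_left, real_inner_self_eq_norm_sq, norm_add_sq_real, hz₁, hz₂,
        real_inner_comm]
      ring
    refine ⟨NormedSpace.normalize s, NormedSpace.norm_normalize hopp, ?_⟩
    rw [axisRotation_pi_apply (NormedSpace.norm_normalize hopp), NormedSpace.normalize,
      real_inner_smul_left, smul_smul, hsz]
    rw [show 2 * (‖s‖⁻¹ * (‖s‖ ^ 2 / 2)) * ‖s‖⁻¹ = 1 by field_simp, one_smul]
    simp [s]

noncomputable def chirality (u : ℝ → ℝ³) (t : ℝ) : ℝ³ := u t ⨯₃ deriv u t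

noncomputable def transitionEnergyDensity (u : ℝ → ℝ³) (t : ℝ) : ℝ :=
  (‖chirality u t‖ ^ 2 - 1) ^ 2 + ‖deriv (chirality u) t‖ ^ 2

lemma abs_norm_add_sq_sub_one_le {E : Type*} [NormedAddCommGroup E] [InnerProductSpace ℝ E]
    {a b : E} {r : ℝ} (ha : ‖a‖ = 1) (hb : ‖b‖ ≤ r) : |‖a + b‖ ^ 2 - 1| ≤ r * (r + 2) := by
  have hab := abs_le.mp ((abs_real_inner_le_norm a b).trans_eq (by rw [ha, one_mul]))
  rw [norm_add_sq_real, ha, abs_le]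
  constructor <;> nlinarith [norm_nonneg b]

section SpinCurve

variable {n z e : ℝ³} {θ : ℝ → ℝ}

noncomputable def spinCurve (n z e : ℝ³) (θ : ℝ → ℝ) (t : ℝ) : ℝ³ :=
  axisRotation n (θ t) (axisRotation z t e)

lemma contDiff_spinCurve (hθ : ContDiff ℝ 2 θ) : ContDiff ℝ 2 (spinCurve n z e θ) :=
  ((contDiff_axisRotation.of_le le_top).comp hθ).clm_apply
    ((contDiff_axisRotation.of_le le_top).clm_apply contDiff_const)

variable (hn : ‖n‖ = 1) (hz : ‖z‖ = 1) (he : ‖e‖ = 1) (hze : ⟪z, e⟫ = 0)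
include hn hz

include he in
lemma norm_spinCurve (t : ℝ) : ‖spinCurve n z e θ t‖ = 1 := by
  rw [spinCurve, norm_axisRotation_apply hn, norm_axisRotation_apply hz, he]

include he in
lemma norm_axisRotation_cross3_axisRotation_le (φ t : ℝ) :
    ‖axisRotation n φ (z ⨯₃ axisRotation z t e)‖ ≤ 1 := by
  rw [norm_axisRotation_apply hn]
  exact (norm_cross3_le_of_norm_eq_one hz _).trans_eq (by rw [norm_axisRotation_apply hz, he])

lemma hasDerivAt_spinCurve {θ' : ℝ} {t : ℝ} (hθ : HasDerivAt θ θ' t) :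
    HasDerivAt (spinCurve n z e θ) (θ' • (n ⨯₃ spinCurve n z e θ t)
      + axisRotation n (θ t) (z ⨯₃ axisRotation z t e)) t :=
  hasDerivAt_axisRotation_apply hn hθ (hasDerivAt_axisRotation_apply_const hz t e)

include he hze in
lemma chirality_spinCurve (hθ : Differentiable ℝ θ) (t : ℝ) :
    chirality (spinCurve n z e θ) t = axisRotation n (θ t) z
      + deriv θ t • (spinCurve n z e θ t ⨯₃ (n ⨯₃ spinCurve n z e θ t)) := by
  have hp : axisRotation z t e ⨯₃ (z ⨯₃ axisRotation z t e) = z := by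
    rw [cross3_cross3, real_inner_self_eq_norm_sq, norm_axisRotation_apply hz, he,
      real_inner_comm, inner_axisRotation_apply, hze]
    simp
  rw [chirality, (hasDerivAt_spinCurve hn hz (hθ t).hasDerivAt).deriv, cross3_add_right,
    cross3_smul_right, spinCurve, axisRotation_cross3 hn, hp, add_comm]

include hze in
/-- `w' = u' × u' + u × u''` with `u'' = θ'' n × u + θ' n × (u' + R_n(θ) (z × p)) - u`, where
`p(t) = R_z(t) e`. -/
lemma hasDerivAt_chirality_spinCurve (hθ : Differentiable ℝ θ)
    (hθ' : Differentiable ℝ (deriv θ)) (t : ℝ) :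
    HasDerivAt (chirality (spinCurve n z e θ)) (spinCurve n z e θ t ⨯₃
      (deriv (deriv θ) t • (n ⨯₃ spinCurve n z e θ t) + deriv θ t • (n ⨯₃
        (deriv (spinCurve n z e θ) t + axisRotation n (θ t) (z ⨯₃ axisRotation z t e))))) t := by
  have hu (s : ℝ) := hasDerivAt_spinCurve (e := e) hn hz (hθ s).hasDerivAt
  have hq : HasDerivAt (fun s => z ⨯₃ axisRotation z s e) (-axisRotation z t e) t := by
    refine ((hasDerivAt_const t z).cross3
      (hasDerivAt_axisRotation_apply_const hz t e)).congr_deriv ?_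
    rw [cross3_cross3_self hz, inner_axisRotation_apply, hze, zero_cross3]
    simp
  have hu'' := (((hθ' t).hasDerivAt.smul ((hasDerivAt_const t n).cross3
    (hu t).differentiableAt.hasDerivAt)).add
      (hasDerivAt_axisRotation_apply hn (hθ t).hasDerivAt hq)).congr_of_eventuallyEq
    (.of_forall fun s => (hu s).deriv)
  refine ((hu t).differentiableAt.hasDerivAt.cross3 hu'').congr_deriv ?_
  have hu_def : axisRotation n (θ t) (axisRotation z t e) = spinCurve n z e θ t := rfl
  simp only [map_neg, hu_def, zero_cross3, cross3_self, zero_add, cross3_add_right,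
    cross3_smul_right, cross3_neg_right]
  module

include he in
lemma norm_deriv_spinCurve_le (hθ : Differentiable ℝ θ) (t : ℝ) :
    ‖deriv (spinCurve n z e θ) t‖ ≤ |deriv θ t| + 1 := by
  rw [(hasDerivAt_spinCurve hn hz (hθ t).hasDerivAt).deriv]
  refine (norm_add_le _ _).trans (add_le_add ?_ ?_)
  · rw [norm_smul, Real.norm_eq_abs]
    exact mul_le_of_le_one_right (abs_nonneg _)
      ((norm_cross3_le_of_norm_eq_one hn _).trans_eq (norm_spinCurve hn hz he t))
  · exact norm_axisRotation_cross3_axisRotation_le hn hz he _ t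

include he hze in
lemma transitionEnergyDensity_spinCurve_le (hθ : Differentiable ℝ θ)
    (hθ' : Differentiable ℝ (deriv θ)) (t : ℝ) :
    transitionEnergyDensity (spinCurve n z e θ) t
      ≤ (|deriv θ t| * (|deriv θ t| + 2)) ^ 2
        + (|deriv (deriv θ) t| + |deriv θ t| * (|deriv θ t| + 2)) ^ 2 := by
  set u := spinCurve n z e θ
  have hu : ‖u t‖ = 1 := norm_spinCurve hn hz he t
  have hnu (v : ℝ³) : ‖u t ⨯₃ (n ⨯₃ v)‖ ≤ ‖v‖ :=
    (norm_cross3_le_of_norm_eq_one hu _).trans (norm_cross3_le_of_norm_eq_one hn _)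
  have hw : |‖chirality u t‖ ^ 2 - 1| ≤ |deriv θ t| * (|deriv θ t| + 2) := by
    rw [chirality_spinCurve hn hz he hze hθ]
    refine abs_norm_add_sq_sub_one_le (by rw [norm_axisRotation_apply hn, hz]) ?_
    rw [norm_smul, Real.norm_eq_abs]
    exact mul_le_of_le_one_right (abs_nonneg _) ((hnu _).trans_eq hu)
  have hw' : ‖deriv (chirality u) t‖
      ≤ |deriv (deriv θ) t| + |deriv θ t| * (|deriv θ t| + 2) := by
    rw [(hasDerivAt_chirality_spinCurve hn hz hze hθ hθ' t).deriv]
    refine (norm_cross3_le_of_norm_eq_one hu _).trans ((norm_add_le _ _).trans (add_le_add ?_ ?_))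
    · rw [norm_smul, Real.norm_eq_abs]
      exact mul_le_of_le_one_right (abs_nonneg _)
        ((norm_cross3_le_of_norm_eq_one hn _).trans_eq hu)
    · rw [norm_smul, Real.norm_eq_abs]
      refine mul_le_mul_of_nonneg_left ((norm_cross3_le_of_norm_eq_one hn _).trans
        ((norm_add_le _ _).trans ?_)) (abs_nonneg _)
      linarith [norm_deriv_spinCurve_le hn hz he hθ t,
        norm_axisRotation_cross3_axisRotation_le hn hz he (θ t) t]
  unfold transitionEnergyDensity
  rw [← sq_abs (‖chirality u t‖ ^ 2 - 1)]
  gcongr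

end SpinCurve

section TransitionAngle

open scoped ContDiff

lemma deriv_smoothTransition_eq_zero {x : ℝ} (hx : x ≤ 0 ∨ 1 ≤ x) :
    deriv smoothTransition x = 0 := by
  rcases hx with hx | hx
  · refine IsLocalMin.deriv_eq_zero (.of_forall fun y => ?_)
    rw [smoothTransition.zero_of_nonpos hx]
    exact smoothTransition.nonneg y
  · refine IsLocalMax.deriv_eq_zero (.of_forall fun y => ?_)
    rw [smoothTransition.one_of_one_le hx]
    exact smoothTransition.le_one y

lemma deriv_deriv_smoothTransition_eq_zero {x : ℝ} (hx : x < 0 ∨ 1 < x) :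
    deriv (deriv smoothTransition) x = 0 := by
  have : deriv smoothTransition =ᶠ[nhds x] fun _ => 0 := by
    rcases hx with hx | hx
    · filter_upwards [Iio_mem_nhds hx] with y hy
        using deriv_smoothTransition_eq_zero (.inl hy.le)
    · filter_upwards [Ioi_mem_nhds hx] with y hy
        using deriv_smoothTransition_eq_zero (.inr hy.le)
  rw [this.deriv_eq, deriv_const]

lemma exists_bound_deriv_smoothTransition : ∃ M, ∀ x,
    |deriv smoothTransition x| ≤ M ∧ |deriv (deriv smoothTransition) x| ≤ M := by
  have hσ := contDiff_infty_iff_deriv.mp (smoothTransition.contDiff (n := ⊤))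
  have hσ' := contDiff_infty_iff_deriv.mp hσ.2
  have hsupp {f : ℝ → ℝ} (hf : ∀ x, x < 0 ∨ 1 < x → f x = 0) : HasCompactSupport f :=
    HasCompactSupport.intro isCompact_Icc fun x hx =>
      hf x (by rwa [Set.mem_Icc, not_and_or, not_le, not_le] at hx)
  obtain ⟨M₁, hM₁⟩ := hσ.2.continuous.bounded_above_of_compact_support
    (hsupp fun x hx => deriv_smoothTransition_eq_zero (hx.imp le_of_lt le_of_lt))
  obtain ⟨M₂, hM₂⟩ := hσ'.2.continuous.bounded_above_of_compact_support
    (hsupp fun x hx => deriv_deriv_smoothTransition_eq_zero hx)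
  exact ⟨max M₁ M₂, fun x => ⟨(hM₁ x).trans (le_max_left _ _), (hM₂ x).trans (le_max_right _ _)⟩⟩

noncomputable def transitionAngle (ρ t : ℝ) : ℝ := π * smoothTransition (ρ⁻¹ * t)

variable {ρ t : ℝ}

lemma contDiff_transitionAngle (ρ : ℝ) : ContDiff ℝ ∞ (transitionAngle ρ) :=
  contDiff_const.mul (smoothTransition.contDiff.comp (contDiff_const.mul contDiff_id))

lemma differentiable_transitionAngle (ρ : ℝ) : Differentiable ℝ (transitionAngle ρ) :=
  (contDiff_transitionAngle ρ).differentiable (by simp)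

lemma differentiable_deriv_transitionAngle (ρ : ℝ) :
    Differentiable ℝ (deriv (transitionAngle ρ)) :=
  (contDiff_infty_iff_deriv.mp (contDiff_transitionAngle ρ)).2.differentiable (by simp)

lemma deriv_transitionAngle (ρ : ℝ) : deriv (transitionAngle ρ)
    = fun t => π * (ρ⁻¹ * deriv smoothTransition (ρ⁻¹ * t)) := by
  unfold transitionAngle
  rw [deriv_const_mul_field']
  simp_rw [deriv_comp_mul_left, smul_eq_mul]

lemma deriv_deriv_transitionAngle (ρ : ℝ) : deriv (deriv (transitionAngle ρ))
    = fun t => π * (ρ⁻¹ * (ρ⁻¹ * deriv (deriv smoothTransition) (ρ⁻¹ * t))) := by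
  rw [deriv_transitionAngle, deriv_const_mul_field']
  simp_rw [deriv_const_mul_field', deriv_comp_mul_left, smul_eq_mul]

lemma transitionAngle_of_nonpos (hρ : 0 < ρ) (ht : t ≤ 0) :
    transitionAngle ρ t = 0 ∧ deriv (transitionAngle ρ) t = 0 := by
  have : ρ⁻¹ * t ≤ 0 := mul_nonpos_of_nonneg_of_nonpos (inv_nonneg.mpr hρ.le) ht
  simp [transitionAngle, deriv_transitionAngle, smoothTransition.zero_of_nonpos this,
    deriv_smoothTransition_eq_zero (.inl this)]

lemma transitionAngle_of_le (hρ : 0 < ρ) (ht : ρ ≤ t) :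
    transitionAngle ρ t = π ∧ deriv (transitionAngle ρ) t = 0 := by
  have : 1 ≤ ρ⁻¹ * t := by rwa [inv_mul_eq_div, one_le_div hρ]
  simp [transitionAngle, deriv_transitionAngle, smoothTransition.one_of_one_le this,
    deriv_smoothTransition_eq_zero (.inr this)]

lemma deriv_transitionAngle_of_notMem (hρ : 0 < ρ) (ht : t ∉ Set.Icc 0 ρ) :
    deriv (transitionAngle ρ) t = 0 ∧ deriv (deriv (transitionAngle ρ)) t = 0 := by
  have : ρ⁻¹ * t < 0 ∨ 1 < ρ⁻¹ * t := by
    rw [Set.mem_Icc, not_and_or, not_le, not_le] at ht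
    refine ht.imp (fun h => mul_neg_of_pos_of_neg (inv_pos.mpr hρ) h) fun h => ?_
    rwa [inv_mul_eq_div, one_lt_div hρ]
  rw [deriv_deriv_transitionAngle, deriv_transitionAngle]
  simp [deriv_smoothTransition_eq_zero (this.imp le_of_lt le_of_lt),
    deriv_deriv_smoothTransition_eq_zero this]

lemma abs_deriv_transitionAngle_le {M : ℝ} (hM : ∀ x,
    |deriv smoothTransition x| ≤ M ∧ |deriv (deriv smoothTransition) x| ≤ M) (hρ : 1 ≤ ρ)
    (t : ℝ) : |deriv (transitionAngle ρ) t| ≤ π * M / ρ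
      ∧ |deriv (deriv (transitionAngle ρ)) t| ≤ π * M / ρ := by
  have hρ0 : 0 < ρ := one_pos.trans_le hρ
  have hM0 : 0 ≤ M := (abs_nonneg _).trans (hM 0).1
  rw [deriv_deriv_transitionAngle, deriv_transitionAngle]
  simp only [abs_mul, abs_of_pos pi_pos, abs_inv, abs_of_pos hρ0]
  constructor
  · rw [div_eq_mul_inv, mul_assoc, mul_comm M]
    gcongr
    exact (hM _).1
  · rw [div_eq_mul_inv, mul_assoc, mul_comm M]
    gcongr
    calc ρ⁻¹ * |deriv (deriv smoothTransition) (ρ⁻¹ * t)| ≤ 1 * M :=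
          mul_le_mul (inv_le_one_of_one_le₀ hρ) (hM _).2 (abs_nonneg _) zero_le_one
      _ = M := one_mul M

end TransitionAngle

lemma exists_transitionEnergyDensity_le {n z e : ℝ³} (hn : ‖n‖ = 1) (hz : ‖z‖ = 1)
    (he : ‖e‖ = 1) (hze : ⟪z, e⟫ = 0) : ∃ C, 0 ≤ C ∧ ∀ ρ, 1 ≤ ρ → ∀ t,
      transitionEnergyDensity (spinCurve n z e (transitionAngle ρ)) t
        ≤ (Set.Icc 0 ρ).indicator (fun _ => C / ρ ^ 2) t := by
  obtain ⟨M, hM⟩ := exists_bound_deriv_smoothTransition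
  have hA : 0 ≤ π * M := mul_nonneg pi_pos.le ((abs_nonneg _).trans (hM 0).1)
  set A := π * M
  refine ⟨A ^ 2 * ((A + 2) ^ 2 + (A + 3) ^ 2), by positivity, fun ρ hρ t => ?_⟩
  have hρ0 : 0 < ρ := one_pos.trans_le hρ
  have hdens := transitionEnergyDensity_spinCurve_le hn hz he hze
    (differentiable_transitionAngle ρ) (differentiable_deriv_transitionAngle ρ) t
  by_cases ht : t ∈ Set.Icc 0 ρ
  · rw [Set.indicator_of_mem ht]
    refine hdens.trans ?_
    obtain ⟨ha, hb⟩ := abs_deriv_transitionAngle_le hM hρ t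
    set a := |deriv (transitionAngle ρ) t|
    set b := |deriv (deriv (transitionAngle ρ)) t|
    have hδ : A / ρ ≤ A := div_le_self hA hρ
    have h₁ : a * (a + 2) ≤ A / ρ * (A + 2) :=
      mul_le_mul ha (by linarith) (by positivity) (by positivity)
    have h₂ : b + a * (a + 2) ≤ A / ρ * (A + 3) := by linarith
    calc (a * (a + 2)) ^ 2 + (b + a * (a + 2)) ^ 2
        ≤ (A / ρ * (A + 2)) ^ 2 + (A / ρ * (A + 3)) ^ 2 := by gcongr
      _ = A ^ 2 * ((A + 2) ^ 2 + (A + 3) ^ 2) / ρ ^ 2 := by field_simp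
  · rw [Set.indicator_of_notMem ht]
    obtain ⟨ha, hb⟩ := deriv_transitionAngle_of_notMem hρ0 ht
    simpa [ha, hb] using hdens

lemma lintegral_ofReal_le_of_le_indicator {f : ℝ → ℝ} {a b c : ℝ} (hc : 0 ≤ c)
    (hf : ∀ t, f t ≤ (Set.Icc a b).indicator (fun _ => c) t) :
    ∫⁻ t, ENNReal.ofReal (f t) ≤ ENNReal.ofReal (c * (b - a)) := by
  calc ∫⁻ t, ENNReal.ofReal (f t)
      ≤ ∫⁻ t, (Set.Icc a b).indicator (fun _ => ENNReal.ofReal c) t := by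
        refine lintegral_mono fun t => (ENNReal.ofReal_le_ofReal (hf t)).trans_eq ?_
        by_cases ht : t ∈ Set.Icc a b <;> simp [ht]
    _ = ENNReal.ofReal (c * (b - a)) := by
        rw [lintegral_indicator_const measurableSet_Icc, Real.volume_Icc, ENNReal.ofReal_mul hc]

/-- For every pair of unit vectors `z₁ z₂ ∈ S²` and every `ε > 0` there are
`ρ > 0` and a `C²` map `u : ℝ → ℝ³` with values in `S²` whose chirality `w = u × u'`
equals `z₁` for `t ≤ 0`, equals `z₂` for `t ≥ ρ`, and whose transition energy is at most `ε`.
Hence the optimal transition energy between any two chiralities is zero. -/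
theorem stmt0 (z₁ z₂ : EuclideanSpace ℝ (Fin 3)) (hz₁ : ‖z₁‖ = 1) (hz₂ : ‖z₂‖ = 1)
    (ε : ℝ) (hε : 0 < ε) :
    ∃ ρ : ℝ, 0 < ρ ∧ ∃ u : ℝ → EuclideanSpace ℝ (Fin 3), ContDiff ℝ 2 u ∧
      (∀ t : ℝ, ‖u t‖ = 1) ∧
      (∀ t : ℝ, t ≤ 0 → cross3 (u t) (deriv u t) = z₁) ∧
      (∀ t : ℝ, ρ ≤ t → cross3 (u t) (deriv u t) = z₂) ∧
      (∫⁻ t : ℝ, ENNReal.ofReal ((‖cross3 (u t) (deriv u t)‖ ^ 2 - 1) ^ 2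
          + ‖deriv (fun s => cross3 (u s) (deriv u s)) t‖ ^ 2)
        ≤ ENNReal.ofReal ε) := by
  obtain ⟨e, he, hz₁e⟩ := exists_norm_eq_one_inner_eq_zero (by simp) z₁
  obtain ⟨n, hn, hnz⟩ := exists_axisRotation_pi_eq hz₁ hz₂
  obtain ⟨C, hC0, hC⟩ := exists_transitionEnergyDensity_le hn hz₁ he hz₁e
  set ρ := max 1 (C / ε)
  have hρ : 1 ≤ ρ := le_max_left _ _
  have hρ0 : 0 < ρ := one_pos.trans_le hρ
  have hCρ : C / ρ ≤ ε := (div_le_iff₀ hρ0).mpr ((div_le_iff₀' hε).mp (le_max_right _ _))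
  have hθ := differentiable_transitionAngle ρ
  refine ⟨ρ, hρ0, spinCurve n z₁ e (transitionAngle ρ),
    contDiff_spinCurve (contDiff_infty.mp (contDiff_transitionAngle ρ) 2),
    norm_spinCurve hn hz₁ he, fun t ht => ?_, fun t ht => ?_, ?_⟩
  · obtain ⟨h₀, h₁⟩ := transitionAngle_of_nonpos hρ0 ht
    rw [← chirality, chirality_spinCurve hn hz₁ he hz₁e hθ, h₀, h₁]
    simp
  · obtain ⟨h₀, h₁⟩ := transitionAngle_of_le hρ0 ht
    rw [← chirality, chirality_spinCurve hn hz₁ he hz₁e hθ, h₀, h₁, hnz]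
    simp
  · refine (lintegral_ofReal_le_of_le_indicator (by positivity) (hC ρ hρ)).trans
      (ENNReal.ofReal_le_ofReal ?_)
    rwa [sub_zero, div_mul_eq_mul_div, pow_two, mul_div_mul_right _ _ hρ0.ne']
end

section
/- Let q₋ and q₊ be two distinct elements of Q_k. Then for every continuously differentiable map w : ℝ → ℝ³ such that w(t) ∈ L_k for every t ∈ ℝ, w(t) → q₋ as t → −∞, and w(t) → q₊ as t → +∞, one has ∫_ℝ [(‖w(t)‖² − 1)² + ‖w'(t)‖²] dt ≥ 8/3 (the integral of the nonnegative integrand, possibly equal to +∞). -/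
/-!
If `w` never vanished, `w / ‖w‖` would be a continuous map from `ℝ` into the finite set `Q_k`,
hence constant, forcing `q₋ = q₊`. So `w(t₀) = 0` for some `t₀`. On each side of `t₀` the
Modica–Mortola inequality `(r² - 1)² + r'² ≥ 2 |1 - r²| |r'|` for `r = ‖w‖` bounds the energy
from below by `2 ∫₀¹ (1 - r²) dr = 4/3`. Since `r` need not be differentiable at zeros of `w`,
we compare with right derivatives, which exist everywhere and are bounded by `‖w'‖`.
-/

open MeasureTheory Filter Set Topology

variable {E : Type*} [NormedAddCommGroup E]

/-- Primitive of `2 (1 - r²) = 2 √W(r)` for the double well `W(r) = (r² - 1)²`. -/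
noncomputable def doubleWellPrimitive (r : ℝ) : ℝ := 2 * (r - r ^ 3 / 3)

lemma hasDerivAt_doubleWellPrimitive (r : ℝ) :
    HasDerivAt doubleWellPrimitive (2 * (1 - r ^ 2)) r := by
  unfold doubleWellPrimitive
  exact (((hasDerivAt_id' r).fun_sub ((hasDerivAt_pow 3 r).div_const 3)).const_mul 2).congr_deriv
    (by ring)

lemma continuous_doubleWellPrimitive : Continuous doubleWellPrimitive := by
  unfold doubleWellPrimitive; fun_prop

lemma Filter.Tendsto.doubleWellPrimitive_norm {l : Filter ℝ} {w : ℝ → E} {c : E} (hc : ‖c‖ = 1)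
    (hw : Tendsto w l (𝓝 c)) : Tendsto (fun t => doubleWellPrimitive ‖w t‖) l (𝓝 (4 / 3)) := by
  have h := (continuous_doubleWellPrimitive.tendsto ‖c‖).comp hw.norm
  rwa [hc, show doubleWellPrimitive 1 = 4 / 3 by norm_num [doubleWellPrimitive]] at h

section Normalize

variable [NormedSpace ℝ E]

lemma inv_norm_smul_mem_of_mem_span_singleton {v x : E} (hv : ‖v‖ = 1)
    (hx : x ∈ Submodule.span ℝ {v}) (hx0 : x ≠ 0) : ‖x‖⁻¹ • x ∈ ({v, -v} : Set E) := by
  obtain ⟨c, rfl⟩ := Submodule.mem_span_singleton.mp hx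
  have hc : c ≠ 0 := by rintro rfl; simp at hx0
  rw [norm_smul, hv, mul_one, smul_smul, Real.norm_eq_abs]
  rcases hc.lt_or_gt with h | h
  · right
    rw [abs_of_neg h, inv_neg, neg_mul, inv_mul_cancel₀ h.ne, neg_smul, one_smul]
    rfl
  · left
    rw [abs_of_pos h, inv_mul_cancel₀ h.ne', one_smul]

lemma exists_eq_zero_of_inv_norm_smul_mem_finite {T : Set E} (hT : T.Finite) {w : ℝ → E}
    (hw : Continuous w) (hwT : ∀ t, w t ≠ 0 → ‖w t‖⁻¹ • w t ∈ T) {a b : E} (ha : ‖a‖ = 1)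
    (hb : ‖b‖ = 1) (hab : a ≠ b) (hbot : Tendsto w atBot (𝓝 a))
    (htop : Tendsto w atTop (𝓝 b)) : ∃ t, w t = 0 := by
  by_contra! hw0
  set u : ℝ → E := fun t => ‖w t‖⁻¹ • w t
  have hu : Continuous u := (hw.norm.inv₀ fun t => norm_ne_zero_iff.mpr (hw0 t)).smul hw
  have hconst : u = fun _ => u 0 := funext fun t =>
    isPreconnected_univ.constant_of_mapsTo hT.isDiscrete hu.continuousOn
      (fun t _ => hwT t (hw0 t)) trivial trivial
  have hlim : ∀ {l : Filter ℝ} [l.NeBot] {c : E}, ‖c‖ = 1 → Tendsto w l (𝓝 c) → u 0 = c := by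
    intro l _ c hc h
    have hu : Tendsto u l (𝓝 (‖c‖⁻¹ • c)) := (h.norm.inv₀ (by simp [hc])).smul h
    rw [hc, inv_one, one_smul, hconst] at hu
    exact tendsto_const_nhds_iff.mp hu
  exact hab ((hlim ha hbot).symm.trans (hlim hb htop))

end Normalize

section Energy

variable [InnerProductSpace ℝ E]

lemma HasDerivAt.exists_hasDerivWithinAt_Ioi_norm {w : ℝ → E} {v : E} {x : ℝ}
    (hw : HasDerivAt w v x) : ∃ n, HasDerivWithinAt (fun t => ‖w t‖) n (Ioi x) x ∧ |n| ≤ ‖v‖ := by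
  by_cases hx : w x = 0
  · refine ⟨‖v‖, ?_, (abs_of_nonneg (norm_nonneg v)).le⟩
    rw [hasDerivWithinAt_iff_isLittleO]
    refine Asymptotics.IsBigO.trans_isLittleO (g := fun y => w y - w x - (y - x) • v)
      (.of_bound' ?_) (hw.hasDerivWithinAt (s := Ioi x)).isLittleO
    filter_upwards [self_mem_nhdsWithin] with y (hy : x < y)
    have hyx : (y - x) * ‖v‖ = ‖(y - x) • v‖ := by
      rw [norm_smul, Real.norm_of_nonneg (sub_pos.2 hy).le]
    simp only [hx, norm_zero, sub_zero, smul_eq_mul, Real.norm_eq_abs, hyx]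
    exact abs_norm_sub_norm_le (w y) ((y - x) • v)
  · have hsq := hw.norm_sq.sqrt (by positivity)
    simp only [Real.sqrt_sq (norm_nonneg _)] at hsq
    refine ⟨_, hsq.hasDerivWithinAt, ?_⟩
    rw [abs_div, abs_of_pos (by positivity : (0 : ℝ) < 2 * ‖w x‖), abs_mul, abs_two,
      mul_div_mul_left _ _ two_ne_zero, div_le_iff₀ (norm_pos_iff.mpr hx), mul_comm]
    exact abs_real_inner_le_norm _ _

noncomputable def energyDensity (w : ℝ → E) (t : ℝ) : ℝ := (‖w t‖ ^ 2 - 1) ^ 2 + ‖deriv w t‖ ^ 2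

lemma ContDiff.continuous_energyDensity {w : ℝ → E} (hw : ContDiff ℝ 1 w) :
    Continuous (energyDensity w) :=
  ((hw.continuous.norm.pow 2).sub continuous_const |>.pow 2).add
    ((hw.continuous_deriv le_rfl).norm.pow 2)

lemma energyDensity_nonneg (w : ℝ → E) (t : ℝ) : 0 ≤ energyDensity w t := by
  unfold energyDensity; positivity

lemma abs_sub_doubleWellPrimitive_norm_le_integral {w : ℝ → E} (hw : ContDiff ℝ 1 w) {a b : ℝ}
    (hab : a ≤ b) :
    |doubleWellPrimitive ‖w b‖ - doubleWellPrimitive ‖w a‖| ≤ ∫ t in a..b, energyDensity w t := by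
  choose n hn hn_le using fun x =>
    ((hw.differentiable one_ne_zero x).hasDerivAt).exists_hasDerivWithinAt_Ioi_norm
  have hg : ∀ x, HasDerivWithinAt (fun t => doubleWellPrimitive ‖w t‖)
      (2 * (1 - ‖w x‖ ^ 2) * n x) (Ioi x) x := fun x =>
    (hasDerivAt_doubleWellPrimitive ‖w x‖).comp_hasDerivWithinAt (h := fun t => ‖w t‖) x (hn x)
  have hg_le : ∀ x, |2 * (1 - ‖w x‖ ^ 2) * n x| ≤ energyDensity w x := by
    intro x
    have h1 : |2 * (1 - ‖w x‖ ^ 2) * n x| ≤ 2 * |1 - ‖w x‖ ^ 2| * ‖deriv w x‖ := by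
      rw [abs_mul, abs_mul, abs_two]
      exact mul_le_mul_of_nonneg_left (hn_le x) (by positivity)
    have h2 : (‖w x‖ ^ 2 - 1) ^ 2 = |1 - ‖w x‖ ^ 2| ^ 2 := by rw [sq_abs]; ring
    rw [energyDensity, h2]
    nlinarith [sq_nonneg (|1 - ‖w x‖ ^ 2| - ‖deriv w x‖)]
  have hg_cont : Continuous fun t => doubleWellPrimitive ‖w t‖ :=
    continuous_doubleWellPrimitive.comp hw.continuous.norm
  have hint : IntegrableOn (energyDensity w) (Icc a b) :=
    hw.continuous_energyDensity.integrableOn_Icc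
  rw [abs_sub_le_iff]
  constructor
  · exact intervalIntegral.sub_le_integral_of_hasDeriv_right_of_le hab hg_cont.continuousOn
      (fun x _ => hg x) hint fun x _ => (le_abs_self _).trans (hg_le x)
  · have := intervalIntegral.sub_le_integral_of_hasDeriv_right_of_le hab hg_cont.neg.continuousOn
      (fun x _ => (hg x).neg) hint fun x _ => (neg_le_abs _).trans (hg_le x)
    simp only [Pi.neg_apply] at this
    linarith

lemma ofReal_intervalIntegral_le_lintegral {f : ℝ → ℝ} (hf : Continuous f) (hf0 : ∀ t, 0 ≤ f t)
    {a b : ℝ} (hab : a ≤ b) :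
    ENNReal.ofReal (∫ t in a..b, f t) ≤ ∫⁻ t, ENNReal.ofReal (f t) := by
  rw [intervalIntegral.integral_of_le hab, ofReal_integral_eq_lintegral_ofReal
    (hf.integrableOn_Icc.mono_set Ioc_subset_Icc_self) (ae_of_all _ fun t => hf0 t)]
  exact setLIntegral_le_lintegral _ _

lemma ofReal_doubleWellPrimitive_add_le_lintegral_of_eq_zero {w : ℝ → E} (hw : ContDiff ℝ 1 w)
    {a t₀ b : ℝ} (hw₀ : w t₀ = 0) (hat₀ : a ≤ t₀) (ht₀b : t₀ ≤ b) :
    ENNReal.ofReal (doubleWellPrimitive ‖w a‖ + doubleWellPrimitive ‖w b‖)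
      ≤ ∫⁻ t, ENNReal.ofReal (energyDensity w t) := by
  have hφ₀ : doubleWellPrimitive ‖w t₀‖ = 0 := by simp [doubleWellPrimitive, hw₀]
  have hleft := abs_sub_doubleWellPrimitive_norm_le_integral hw hat₀
  have hright := abs_sub_doubleWellPrimitive_norm_le_integral hw ht₀b
  rw [hφ₀, zero_sub, abs_neg] at hleft
  rw [hφ₀, sub_zero] at hright
  have hcont := hw.continuous_energyDensity
  refine le_trans (ENNReal.ofReal_le_ofReal ?_)
    (ofReal_intervalIntegral_le_lintegral hcont (energyDensity_nonneg w) (hat₀.trans ht₀b))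
  rw [← intervalIntegral.integral_add_adjacent_intervals (hcont.intervalIntegrable a t₀)
    (hcont.intervalIntegrable t₀ b)]
  linarith [le_abs_self (doubleWellPrimitive ‖w a‖), le_abs_self (doubleWellPrimitive ‖w b‖)]

end Energy

theorem stmt1_general (k : ℕ) (q : Fin k → EuclideanSpace ℝ (Fin 3))
    (hq : ∀ l, ‖q l‖ = 1)
    (qm qp : EuclideanSpace ℝ (Fin 3))
    (hqm : qm ∈ ⋃ l, ({q l, -q l} : Set (EuclideanSpace ℝ (Fin 3))))
    (hqp : qp ∈ ⋃ l, ({q l, -q l} : Set (EuclideanSpace ℝ (Fin 3))))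
    (hne : qm ≠ qp)
    (w : ℝ → EuclideanSpace ℝ (Fin 3)) (hw : ContDiff ℝ 1 w)
    (hL : ∀ t : ℝ, w t ∈ ⋃ l, (Submodule.span ℝ {q l} : Set (EuclideanSpace ℝ (Fin 3))))
    (hbot : Tendsto w atBot (nhds qm)) (htop : Tendsto w atTop (nhds qp)) :
    ENNReal.ofReal (8 / 3)
      ≤ ∫⁻ t : ℝ, ENNReal.ofReal ((‖w t‖ ^ 2 - 1) ^ 2 + ‖deriv w t‖ ^ 2) := by
  have hQ : ∀ x ∈ ⋃ l, ({q l, -q l} : Set (EuclideanSpace ℝ (Fin 3))), ‖x‖ = 1 := by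
    simp only [mem_iUnion, mem_insert_iff, mem_singleton_iff]
    rintro x ⟨l, rfl | rfl⟩ <;> simp [hq]
  obtain ⟨t₀, ht₀⟩ : ∃ t, w t = 0 := by
    refine exists_eq_zero_of_inv_norm_smul_mem_finite (T := ⋃ l, {q l, -q l})
      (finite_iUnion fun l => (finite_singleton _).insert _)
      hw.continuous (fun t ht => ?_) (hQ _ hqm) (hQ _ hqp) hne hbot htop
    obtain ⟨l, hl⟩ := mem_iUnion.mp (hL t)
    exact mem_iUnion.mpr ⟨l, inv_norm_smul_mem_of_mem_span_singleton (hq l) hl ht⟩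
  have hlim : Tendsto (fun T => doubleWellPrimitive ‖w (-T)‖ + doubleWellPrimitive ‖w T‖) atTop
      (𝓝 (8 / 3)) := by
    have h := ((hbot.comp tendsto_neg_atTop_atBot).doubleWellPrimitive_norm (hQ _ hqm)).add
      (htop.doubleWellPrimitive_norm (hQ _ hqp))
    rwa [show (4 / 3 + 4 / 3 : ℝ) = 8 / 3 by norm_num] at h
  change _ ≤ ∫⁻ t, ENNReal.ofReal (energyDensity w t)
  refine le_of_tendsto (ENNReal.tendsto_ofReal hlim) ?_
  filter_upwards [eventually_ge_atTop |t₀|] with T hT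
  exact ofReal_doubleWellPrimitive_add_le_lintegral_of_eq_zero hw ht₀
    (by linarith [neg_abs_le t₀]) ((le_abs_self t₀).trans hT)

/-- Let `q₋ ≠ q₊` be two elements of `Q_k = {±q₁,…,±q_k}`. Every `C¹` map
`w : ℝ → ℝ³` taking values in `L_k = ⋃ span(q_l)` and connecting `q₋` (at `−∞`) to `q₊`
(at `+∞`) has energy at least `8/3`. -/
theorem stmt1 (k : ℕ) (hk : 1 ≤ k) (q : Fin k → EuclideanSpace ℝ (Fin 3))
    (hq : ∀ l, ‖q l‖ = 1) (hqinj : Function.Injective q)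
    (qm qp : EuclideanSpace ℝ (Fin 3))
    (hqm : qm ∈ ⋃ l, ({q l, -q l} : Set (EuclideanSpace ℝ (Fin 3))))
    (hqp : qp ∈ ⋃ l, ({q l, -q l} : Set (EuclideanSpace ℝ (Fin 3))))
    (hne : qm ≠ qp)
    (w : ℝ → EuclideanSpace ℝ (Fin 3)) (hw : ContDiff ℝ 1 w)
    (hL : ∀ t : ℝ, w t ∈ ⋃ l, (Submodule.span ℝ {q l} : Set (EuclideanSpace ℝ (Fin 3))))
    (hbot : Tendsto w atBot (nhds qm)) (htop : Tendsto w atTop (nhds qp)) :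
    ENNReal.ofReal (8 / 3)
      ≤ ∫⁻ t : ℝ, ENNReal.ofReal ((‖w t‖ ^ 2 - 1) ^ 2 + ‖deriv w t‖ ^ 2) :=
  stmt1_general k q hq qm qp hqm hqp hne w hw hL hbot htop
end

section
/- For every continuously differentiable function v : ℝ → ℝ with v(t) → −1 as t → −∞ and v(t) → +1 as t → +∞, one has ∫_ℝ [(v(t)² − 1)² + v'(t)²] dt ≥ 8/3 (the integral of the nonnegative integrand, possibly equal to +∞). -/
/-!
With `Φ(u) = ∫₀ᵘ 2|1 - s²| ds`, a primitive of `2√W` for the double well `W(s) = (1 - s²)²`,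
the inequality `2ab ≤ a² + b²` gives `(Φ ∘ v)' = 2|1 - v²| v' ≤ (v² - 1)² + v'²` pointwise.
Integrating over `[a, b]` and letting `a → -∞`, `b → +∞` bounds the energy from below by
`Φ(1) - Φ(-1) = ∫₋₁¹ 2(1 - s²) ds = 8/3`.
-/

open MeasureTheory Filter Set intervalIntegral Topology

section LowerBound

variable {F f h : ℝ → ℝ}

theorem ofReal_sub_le_lintegral_of_hasDerivAt_of_le (hF : ∀ t, HasDerivAt F (f t) t)
    (hh : LocallyIntegrable h) (h_nonneg : ∀ t, 0 ≤ h t) (hfh : ∀ t, f t ≤ h t)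
    {a b : ℝ} (hab : a ≤ b) :
    ENNReal.ofReal (F b - F a) ≤ ∫⁻ t, ENNReal.ofReal (h t) := by
  have hint : IntegrableOn h (Icc a b) := hh.integrableOn_isCompact isCompact_Icc
  calc ENNReal.ofReal (F b - F a)
      ≤ ENNReal.ofReal (∫ t in a..b, h t) :=
        ENNReal.ofReal_le_ofReal <| sub_le_integral_of_hasDeriv_right_of_le hab
          (fun t _ => (hF t).continuousAt.continuousWithinAt) (fun t _ => (hF t).hasDerivWithinAt)
          hint (fun t _ => hfh t)
    _ = ∫⁻ t in Ioc a b, ENNReal.ofReal (h t) := by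
        rw [integral_of_le hab, ofReal_integral_eq_lintegral_ofReal
          (hint.mono_set Ioc_subset_Icc_self) (ae_of_all _ h_nonneg)]
    _ ≤ ∫⁻ t, ENNReal.ofReal (h t) := setLIntegral_le_lintegral _ _

theorem ofReal_sub_le_lintegral_of_tendsto (hF : ∀ t, HasDerivAt F (f t) t)
    (hh : LocallyIntegrable h) (h_nonneg : ∀ t, 0 ≤ h t) (hfh : ∀ t, f t ≤ h t)
    {l₁ l₂ : ℝ} (hbot : Tendsto F atBot (𝓝 l₁)) (htop : Tendsto F atTop (𝓝 l₂)) :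
    ENNReal.ofReal (l₂ - l₁) ≤ ∫⁻ t, ENNReal.ofReal (h t) := by
  have hlim : Tendsto (fun p : ℝ × ℝ => ENNReal.ofReal (F p.2 - F p.1)) (atBot ×ˢ atTop)
      (𝓝 (ENNReal.ofReal (l₂ - l₁))) :=
    (ENNReal.continuous_ofReal.tendsto _).comp
      ((htop.comp tendsto_snd).sub (hbot.comp tendsto_fst))
  refine le_of_tendsto hlim ?_
  filter_upwards [prod_mem_prod (Iic_mem_atBot 0) (Ici_mem_atTop 0)] with p hp
  exact ofReal_sub_le_lintegral_of_hasDerivAt_of_le hF hh h_nonneg hfh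
    ((mem_Iic.1 hp.1).trans (mem_Ici.1 hp.2))

end LowerBound

noncomputable def modicaMortolaPotential (u : ℝ) : ℝ := ∫ s in (0 : ℝ)..u, 2 * |1 - s ^ 2|

theorem continuous_two_mul_abs_one_sub_sq : Continuous fun s : ℝ => 2 * |1 - s ^ 2| := by
  fun_prop

theorem hasDerivAt_modicaMortolaPotential (u : ℝ) :
    HasDerivAt modicaMortolaPotential (2 * |1 - u ^ 2|) u :=
  integral_hasDerivAt_right (continuous_two_mul_abs_one_sub_sq.intervalIntegrable _ _)
    (continuous_two_mul_abs_one_sub_sq.stronglyMeasurableAtFilter _ _)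
    continuous_two_mul_abs_one_sub_sq.continuousAt

theorem modicaMortolaPotential_one_sub_neg_one :
    modicaMortolaPotential 1 - modicaMortolaPotential (-1) = 8 / 3 := by
  have hint := continuous_two_mul_abs_one_sub_sq.intervalIntegrable (μ := volume)
  calc modicaMortolaPotential 1 - modicaMortolaPotential (-1)
      = ∫ s in (-1 : ℝ)..1, 2 * |1 - s ^ 2| := integral_interval_sub_left (hint _ _) (hint _ _)
    _ = ∫ s in (-1 : ℝ)..1, 2 * (1 - s ^ 2) := by
        refine integral_congr fun s hs => ?_
        rw [uIcc_of_le (by norm_num), mem_Icc] at hs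
        simp only [abs_of_nonneg (show 0 ≤ 1 - s ^ 2 by nlinarith)]
    _ = 8 / 3 := by
        rw [intervalIntegral.integral_const_mul, integral_sub intervalIntegrable_const
          (intervalIntegrable_pow 2), integral_pow]
        norm_num

theorem two_mul_abs_one_sub_sq_mul_le (x y : ℝ) :
    2 * |1 - x ^ 2| * y ≤ (x ^ 2 - 1) ^ 2 + y ^ 2 := by
  calc 2 * |1 - x ^ 2| * y ≤ |1 - x ^ 2| ^ 2 + y ^ 2 := two_mul_le_add_sq _ _
    _ = (x ^ 2 - 1) ^ 2 + y ^ 2 := by rw [sq_abs]; ring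

/-- scalar Modica–Mortola lower bound: every `C¹` function `v : ℝ → ℝ`
connecting `−1` (at `−∞`) to `+1` (at `+∞`) satisfies
`∫ (v² − 1)² + (v')² ≥ 8/3`. -/
theorem stmt2 (v : ℝ → ℝ) (hv : ContDiff ℝ 1 v)
    (hbot : Tendsto v atBot (nhds (-1))) (htop : Tendsto v atTop (nhds 1)) :
    ENNReal.ofReal (8 / 3)
      ≤ ∫⁻ t : ℝ, ENNReal.ofReal ((v t ^ 2 - 1) ^ 2 + deriv v t ^ 2) := by
  have hΦ : Continuous modicaMortolaPotential :=
    continuous_iff_continuousAt.2 fun u => (hasDerivAt_modicaMortolaPotential u).continuousAt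
  have hv' : Continuous (deriv v) := hv.continuous_deriv le_rfl
  have henergy : Continuous fun t => (v t ^ 2 - 1) ^ 2 + deriv v t ^ 2 := by
    have := hv.continuous; fun_prop
  rw [← modicaMortolaPotential_one_sub_neg_one]
  exact ofReal_sub_le_lintegral_of_tendsto
    (fun t => (hasDerivAt_modicaMortolaPotential (v t)).comp t
      ((hv.differentiable one_ne_zero t).hasDerivAt))
    henergy.locallyIntegrable (fun t => by positivity)
    (fun t => two_mul_abs_one_sub_sq_mul_le (v t) (deriv v t))
    ((hΦ.tendsto _).comp hbot) ((hΦ.tendsto _).comp htop)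
end

section
/- Let N ≥ 2, δ ∈ (0,1), and let u : {0,1,…,N} → ℝ³ satisfy ‖u^i‖ = 1 for all i and the periodic boundary condition ⟨u¹,u⁰⟩ = ⟨u^N,u^{N−1}⟩. Then the renormalized chain energy decomposes exactly as: (1/2)·Σ_{i=0}^{N−2} ‖u^{i+2} − 2(1−δ)u^{i+1} + u^i‖² = 2δ²·Σ_{i=0}^{N−2} ( ‖u^{i+1} − u^i‖²/(2δ) − 1 )² + Σ_{i=0}^{N−2} [ 2(1 − ⟨u^i,u^{i+1}⟩²) − (1/2)‖u^{i+2} − u^i‖² ]. -/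
open MeasureTheory Filter
open scoped RealInnerProductSpace

lemma key_pt (δ : ℝ) (hδ : δ ≠ 0) (x y z : EuclideanSpace ℝ (Fin 3))
    (hx : ‖x‖ = 1) (hy : ‖y‖ = 1) (hz : ‖z‖ = 1) :
    (1/2 : ℝ) * ‖z - (2*(1-δ)) • y + x‖^2
      = 2*δ^2*(‖y - x‖^2/(2*δ) - 1)^2
        + (2*(1 - ⟪x,y⟫^2) - (1/2 : ℝ)*‖z - x‖^2)
        + (2 - 2*δ) * (⟪x,y⟫ - ⟪y,z⟫) := by
  have e : ∀ v : EuclideanSpace ℝ (Fin 3), ‖v‖^2 = ⟪v,v⟫ :=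
    fun v => (real_inner_self_eq_norm_sq v).symm
  have hxx : ⟪x,x⟫ = 1 := by rw [real_inner_self_eq_norm_sq, hx]; norm_num
  have hyy : ⟪y,y⟫ = 1 := by rw [real_inner_self_eq_norm_sq, hy]; norm_num
  have hzz : ⟪z,z⟫ = 1 := by rw [real_inner_self_eq_norm_sq, hz]; norm_num
  have cyx : ⟪y,x⟫ = ⟪x,y⟫ := real_inner_comm x y
  have czx : ⟪z,x⟫ = ⟪x,z⟫ := real_inner_comm x z
  have czy : ⟪z,y⟫ = ⟪y,z⟫ := real_inner_comm y z
  simp only [e, inner_sub_left, inner_sub_right, inner_add_left, inner_add_right,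
    real_inner_smul_left, real_inner_smul_right, hxx, hyy, hzz, cyx, czx, czy]
  field_simp
  ring

/-- exact decomposition of the renormalized chain energy under periodic
boundary conditions. -/
theorem stmt4 (N : ℕ) (hN : 2 ≤ N) (δ : ℝ) (hδ : δ ∈ Set.Ioo (0 : ℝ) 1)
    (u : ℕ → EuclideanSpace ℝ (Fin 3)) (hu : ∀ i ≤ N, ‖u i‖ = 1)
    (hper : ⟪u 1, u 0⟫ = ⟪u N, u (N - 1)⟫) :
    (1 / 2 : ℝ) * ∑ i ∈ Finset.range (N - 1),
        ‖u (i + 2) - (2 * (1 - δ)) • u (i + 1) + u i‖ ^ 2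
      = 2 * δ ^ 2 * ∑ i ∈ Finset.range (N - 1),
            (‖u (i + 1) - u i‖ ^ 2 / (2 * δ) - 1) ^ 2
        + ∑ i ∈ Finset.range (N - 1),
            (2 * (1 - ⟪u i, u (i + 1)⟫ ^ 2) - (1 / 2 : ℝ) * ‖u (i + 2) - u i‖ ^ 2) := by
  have hδ0 : δ ≠ 0 := ne_of_gt hδ.1
  set f : ℕ → ℝ := fun i => ⟪u i, u (i + 1)⟫ with hf
  have key : ∀ i ∈ Finset.range (N - 1),
      (1/2 : ℝ) * ‖u (i + 2) - (2*(1-δ)) • u (i + 1) + u i‖^2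
        = (2*δ^2*(‖u (i+1) - u i‖^2/(2*δ) - 1)^2
            + (2*(1 - ⟪u i, u (i+1)⟫^2) - (1/2 : ℝ)*‖u (i+2) - u i‖^2))
          + (2 - 2*δ) * (f i - f (i + 1)) := by
    intro i hi
    have hi' : i < N - 1 := Finset.mem_range.mp hi
    have h2 : i + 2 ≤ N := by omega
    have := key_pt δ hδ0 (u i) (u (i+1)) (u (i+2))
      (hu i (by omega)) (hu (i+1) (by omega)) (hu (i+2) h2)
    simpa [hf, add_assoc] using this
  have hsum : ∑ i ∈ Finset.range (N - 1),
      ((1/2 : ℝ) * ‖u (i + 2) - (2*(1-δ)) • u (i + 1) + u i‖^2)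
      = ∑ i ∈ Finset.range (N - 1),
        ((2*δ^2*(‖u (i+1) - u i‖^2/(2*δ) - 1)^2
            + (2*(1 - ⟪u i, u (i+1)⟫^2) - (1/2 : ℝ)*‖u (i+2) - u i‖^2))
          + (2 - 2*δ) * (f i - f (i + 1))) := Finset.sum_congr rfl key
  have htel : ∑ i ∈ Finset.range (N - 1), (f i - f (i + 1)) = f 0 - f (N - 1) :=
    Finset.sum_range_sub' f (N - 1)
  have hfper : f 0 - f (N - 1) = 0 := by
    have hN1 : N - 1 + 1 = N := by omega
    have h1 : f (N - 1) = ⟪u (N - 1), u N⟫ := by simp only [hf, hN1]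
    have h0 : f 0 = ⟪u 0, u 1⟫ := rfl
    rw [h0, h1, real_inner_comm (u 1) (u 0), real_inner_comm (u N) (u (N-1)), hper]; ring
  rw [Finset.mul_sum, hsum, Finset.sum_add_distrib, ← Finset.mul_sum, htel, hfper,
    mul_zero, add_zero, Finset.sum_add_distrib, ← Finset.mul_sum]
end

section
/- Let N ≥ 2, δ ∈ (0,1), and let u : {0,1,…,N} → ℝ³ satisfy ‖u^i‖ = 1 for all i and the periodic boundary condition ⟨u¹,u⁰⟩ = ⟨u^N,u^{N−1}⟩. Define z^i := (u^i × u^{i+1})/√(2δ) for 0 ≤ i ≤ N−1. Then H_δ(u) ≤ 2δ²·Σ_{i=0}^{N−2} ( ‖u^{i+1} − u^i‖²/(2δ) − 1 )² + δ·Σ_{i=0}^{N−2} ‖z^{i+1} − z^i‖². -/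
/-!
Write `a_i = ⟪u^i, u^{i+1}⟫` and `b_i = ⟪u^i, u^{i+2}⟫`. For unit vectors every term of both sides
is a polynomial in `a_i, a_{i+1}, b_i` (Lagrange's identity handles the cross products), and
termwise the right-hand side minus the left-hand side equals
`g(a_{i+1}) - g(a_i) + (a_i - a_{i+1})² / 2` with `g t = 2(1-δ)t - t²`. The squares are
nonnegative and the `g`-differences telescope to `g(a_{N-1}) - g(a_0)`, which vanishes by the
periodic boundary condition.
-/

open MeasureTheory Filter
open scoped RealInnerProductSpace

section InnerProductSpace

variable {E : Type*} [NormedAddCommGroup E] [InnerProductSpace ℝ E]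

lemma real_inner_self_of_norm_eq_one {x : E} (hx : ‖x‖ = 1) : ⟪x, x⟫ = 1 := by
  rw [real_inner_self_eq_norm_sq, hx, one_pow]

lemma norm_sub_sq_of_norm_eq_one {x y : E} (hx : ‖x‖ = 1) (hy : ‖y‖ = 1) :
    ‖x - y‖ ^ 2 = 2 - 2 * ⟪x, y⟫ := by
  rw [norm_sub_sq_real, hx, hy]
  ring

lemma norm_add_sub_smul_sq_of_norm_eq_one {x y w : E} (hx : ‖x‖ = 1) (hy : ‖y‖ = 1)
    (hw : ‖w‖ = 1) (c : ℝ) :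
    ‖w - c • y + x‖ ^ 2 = 2 + 2 * ⟪x, w⟫ + c ^ 2 - 2 * c * (⟪x, y⟫ + ⟪y, w⟫) := by
  rw [← real_inner_self_eq_norm_sq]
  simp only [inner_add_left, inner_add_right, inner_sub_left, inner_sub_right,
    real_inner_smul_left, real_inner_smul_right, real_inner_self_of_norm_eq_one hx,
    real_inner_self_of_norm_eq_one hy, real_inner_self_of_norm_eq_one hw,
    real_inner_comm x y, real_inner_comm x w, real_inner_comm y w]
  ring

lemma mul_norm_inv_sqrt_two_mul_smul_sq {δ : ℝ} (hδ : 0 < δ) (v : E) :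
    δ * ‖(Real.sqrt (2 * δ))⁻¹ • v‖ ^ 2 = 1 / 2 * ‖v‖ ^ 2 := by
  rw [norm_smul, mul_pow, norm_inv, Real.norm_of_nonneg (Real.sqrt_nonneg _), inv_pow,
    Real.sq_sqrt (by positivity)]
  field_simp

end InnerProductSpace

lemma cross3_inner_cross3 (a b c d : EuclideanSpace ℝ (Fin 3)) :
    ⟪cross3 a b, cross3 c d⟫ = ⟪a, c⟫ * ⟪b, d⟫ - ⟪a, d⟫ * ⟪b, c⟫ := by
  simp [cross3, PiLp.inner_apply, Fin.sum_univ_three, crossProduct]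
  ring

lemma norm_cross3_sub_cross3_sq_of_norm_eq_one {x y w : EuclideanSpace ℝ (Fin 3)}
    (hx : ‖x‖ = 1) (hy : ‖y‖ = 1) (hw : ‖w‖ = 1) :
    ‖cross3 y w - cross3 x y‖ ^ 2
      = 2 - ⟪x, y⟫ ^ 2 - ⟪y, w⟫ ^ 2 - 2 * ⟪x, y⟫ * ⟪y, w⟫ + 2 * ⟪x, w⟫ := by
  rw [← real_inner_self_eq_norm_sq]
  simp only [inner_sub_left, inner_sub_right, cross3_inner_cross3,
    real_inner_self_of_norm_eq_one hx, real_inner_self_of_norm_eq_one hy, real_inner_self_of_norm_eq_one hw,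
    real_inner_comm x y, real_inner_comm x w, real_inner_comm y w]
  ring

def chainTelescopePotential (δ t : ℝ) : ℝ := 2 * (1 - δ) * t - t ^ 2

lemma half_norm_chain_term_sq_le {δ : ℝ} (hδ : δ ≠ 0) {x y w : EuclideanSpace ℝ (Fin 3)}
    (hx : ‖x‖ = 1) (hy : ‖y‖ = 1) (hw : ‖w‖ = 1) :
    1 / 2 * ‖w - (2 * (1 - δ)) • y + x‖ ^ 2
      ≤ 2 * δ ^ 2 * (‖y - x‖ ^ 2 / (2 * δ) - 1) ^ 2 + 1 / 2 * ‖cross3 y w - cross3 x y‖ ^ 2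
        + (chainTelescopePotential δ ⟪x, y⟫ - chainTelescopePotential δ ⟪y, w⟫) := by
  rw [norm_add_sub_smul_sq_of_norm_eq_one hx hy hw, norm_sub_sq_of_norm_eq_one hy hx,
    norm_cross3_sub_cross3_sq_of_norm_eq_one hx hy hw, real_inner_comm x y,
    chainTelescopePotential, chainTelescopePotential]
  have hdouble_well :
      2 * δ ^ 2 * ((2 - 2 * ⟪x, y⟫) / (2 * δ) - 1) ^ 2 = 2 * (1 - ⟪x, y⟫ - δ) ^ 2 := by
    field_simp
  rw [hdouble_well]
  linarith [sq_nonneg (⟪x, y⟫ - ⟪y, w⟫)]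

theorem stmt5_general (N : ℕ) (δ : ℝ) (hδ : δ ∈ Set.Ioo (0 : ℝ) 1)
    (u : ℕ → EuclideanSpace ℝ (Fin 3)) (hu : ∀ i ≤ N, ‖u i‖ = 1)
    (hper : ⟪u 1, u 0⟫ = ⟪u N, u (N - 1)⟫)
    (z : ℕ → EuclideanSpace ℝ (Fin 3))
    (hz : ∀ i ≤ N - 1, z i = (Real.sqrt (2 * δ))⁻¹ • cross3 (u i) (u (i + 1))) :
    (1 / 2 : ℝ) * ∑ i ∈ Finset.range (N - 1),
        ‖u (i + 2) - (2 * (1 - δ)) • u (i + 1) + u i‖ ^ 2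
      ≤ 2 * δ ^ 2 * ∑ i ∈ Finset.range (N - 1),
            (‖u (i + 1) - u i‖ ^ 2 / (2 * δ) - 1) ^ 2
        + δ * ∑ i ∈ Finset.range (N - 1), ‖z (i + 1) - z i‖ ^ 2 := by
  set g : ℕ → ℝ := fun i ↦ chainTelescopePotential δ ⟪u i, u (i + 1)⟫
  have hterm : ∀ i ∈ Finset.range (N - 1),
      1 / 2 * ‖u (i + 2) - (2 * (1 - δ)) • u (i + 1) + u i‖ ^ 2
        ≤ 2 * δ ^ 2 * (‖u (i + 1) - u i‖ ^ 2 / (2 * δ) - 1) ^ 2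
          + δ * ‖z (i + 1) - z i‖ ^ 2 + (g i - g (i + 1)) := by
    intro i hi
    rw [Finset.mem_range] at hi
    rw [hz (i + 1) (by omega), hz i (by omega), ← smul_sub,
      mul_norm_inv_sqrt_two_mul_smul_sq hδ.1]
    exact half_norm_chain_term_sq_le hδ.1.ne' (hu i (by omega)) (hu (i + 1) (by omega))
      (hu (i + 2) (by omega))
  -- The periodic boundary condition says exactly `g (N - 1) = g 0`.
  have htelescope : ∑ i ∈ Finset.range (N - 1), (g i - g (i + 1)) = 0 := by
    rw [Finset.sum_range_sub', sub_eq_zero, eq_comm]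
    rcases N with _ | N
    · rfl
    · simp only [g, Nat.add_sub_cancel, zero_add] at hper ⊢
      rw [← real_inner_comm (u N), ← hper, real_inner_comm]
  calc (1 / 2 : ℝ) * ∑ i ∈ Finset.range (N - 1),
        ‖u (i + 2) - (2 * (1 - δ)) • u (i + 1) + u i‖ ^ 2
      ≤ ∑ i ∈ Finset.range (N - 1), (2 * δ ^ 2 * (‖u (i + 1) - u i‖ ^ 2 / (2 * δ) - 1) ^ 2
          + δ * ‖z (i + 1) - z i‖ ^ 2 + (g i - g (i + 1))) := by
        rw [Finset.mul_sum]
        exact Finset.sum_le_sum hterm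
    _ = _ := by
        rw [Finset.sum_add_distrib, Finset.sum_add_distrib, htelescope, Finset.mul_sum,
          Finset.mul_sum, add_zero]

/-- upper bound of the renormalized chain energy by the discrete
Modica–Mortola functional of the chirality variable `z^i = (u^i × u^{i+1})/√(2δ)`. -/
theorem stmt5 (N : ℕ) (hN : 2 ≤ N) (δ : ℝ) (hδ : δ ∈ Set.Ioo (0 : ℝ) 1)
    (u : ℕ → EuclideanSpace ℝ (Fin 3)) (hu : ∀ i ≤ N, ‖u i‖ = 1)
    (hper : ⟪u 1, u 0⟫ = ⟪u N, u (N - 1)⟫)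
    (z : ℕ → EuclideanSpace ℝ (Fin 3))
    (hz : ∀ i ≤ N - 1, z i = (Real.sqrt (2 * δ))⁻¹ • cross3 (u i) (u (i + 1))) :
    (1 / 2 : ℝ) * ∑ i ∈ Finset.range (N - 1),
        ‖u (i + 2) - (2 * (1 - δ)) • u (i + 1) + u i‖ ^ 2
      ≤ 2 * δ ^ 2 * ∑ i ∈ Finset.range (N - 1),
            (‖u (i + 1) - u i‖ ^ 2 / (2 * δ) - 1) ^ 2
        + δ * ∑ i ∈ Finset.range (N - 1), ‖z (i + 1) - z i‖ ^ 2 :=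
  stmt5_general N δ hδ u hu hper z hz
end

section
/- Let C > 0, let (δ_n) ⊂ (0,1) with δ_n → 0, let (μ_n) ⊂ (0,∞) with μ_n → 0, let (N_n) ⊂ ℕ with N_n ≥ 2, and for each n let u_n : {0,…,N_n} → S² satisfy the periodic boundary condition and H_{δ_n}(u_n) ≤ C·μ_n. Then there exist C' > 0 and n₀ ∈ ℕ such that for all n ≥ n₀ and all 0 ≤ i ≤ N_n − 1 one has |(1 − δ_n) − ⟨u_n^{i+1}, u_n^i⟩| ≤ C'·μ_n^{1/2}; in particular sup_{0 ≤ i ≤ N_n−1} |1 − ⟨u_n^{i+1},u_n^i⟩| → 0 as n → ∞. -/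
open MeasureTheory Filter
open scoped RealInnerProductSpace

/-!
For three consecutive unit vectors `x, y, z` of the chain, pairing the second difference
`w = z - t • y + x` with `y` and with `z - x` gives
`⟪w, y⟫ = ⟪z, y⟫ + ⟪y, x⟫ - t` and `⟪w, z - x⟫ = -t (⟪z, y⟫ - ⟪y, x⟫)`.
So both the sum and the difference of two consecutive inner products are controlled by `‖w‖`
(the latter once `t ≥ 1`, i.e. `δ ≤ 1/2`), hence each of them lies within `(3/2) ‖w‖` of `t / 2`.
A single term of the energy is at most the whole energy `C μ`, so every link of the chain obeys
the `√μ` bound.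
-/

section UnitTriple

variable {E : Type*} [NormedAddCommGroup E] [InnerProductSpace ℝ E]

lemma inner_secondDiff_mid {y : E} (hy : ‖y‖ = 1) (x z : E) (t : ℝ) :
    ⟪z - t • y + x, y⟫ = ⟪z, y⟫ + ⟪y, x⟫ - t := by
  have hyy : ⟪y, y⟫ = (1 : ℝ) := by rw [real_inner_self_eq_norm_sq, hy, one_pow]
  simp only [inner_add_left, inner_sub_left, real_inner_smul_left, hyy, real_inner_comm x y]
  ring

lemma inner_secondDiff_outer {x z : E} (hx : ‖x‖ = 1) (hz : ‖z‖ = 1) (y : E) (t : ℝ) :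
    ⟪z - t • y + x, z - x⟫ = -(t * (⟪z, y⟫ - ⟪y, x⟫)) := by
  have hxx : ⟪x, x⟫ = (1 : ℝ) := by rw [real_inner_self_eq_norm_sq, hx, one_pow]
  have hzz : ⟪z, z⟫ = (1 : ℝ) := by rw [real_inner_self_eq_norm_sq, hz, one_pow]
  simp only [inner_add_left, inner_sub_left, inner_sub_right, real_inner_smul_left, hxx, hzz,
    real_inner_comm x z, real_inner_comm y z]
  ring

lemma abs_sub_inner_le_of_unit_triple {x y z : E} (hx : ‖x‖ = 1) (hy : ‖y‖ = 1) (hz : ‖z‖ = 1)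
    {s : ℝ} (hs : 1 / 2 ≤ s) :
    |s - ⟪y, x⟫| ≤ 3 / 2 * ‖z - (2 * s) • y + x‖ ∧
      |s - ⟪z, y⟫| ≤ 3 / 2 * ‖z - (2 * s) • y + x‖ := by
  set w := z - (2 * s) • y + x
  have hsum : |⟪z, y⟫ + ⟪y, x⟫ - 2 * s| ≤ ‖w‖ := by
    simpa [← inner_secondDiff_mid hy x z, hy] using abs_real_inner_le_norm w y
  have hzx : ‖z - x‖ ≤ 2 := by
    linarith [norm_sub_le z x]
  have hdiff : 2 * s * |⟪z, y⟫ - ⟪y, x⟫| ≤ 2 * ‖w‖ :=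
    calc 2 * s * |⟪z, y⟫ - ⟪y, x⟫| = |⟪w, z - x⟫| := by
          rw [inner_secondDiff_outer hx hz, abs_neg, abs_mul, abs_of_pos (show (0 : ℝ) < 2 * s by linarith)]
      _ ≤ ‖w‖ * ‖z - x‖ := abs_real_inner_le_norm w (z - x)
      _ ≤ 2 * ‖w‖ := by nlinarith [norm_nonneg w]
  have hdiff' : |⟪z, y⟫ - ⟪y, x⟫| ≤ 2 * ‖w‖ := by
    nlinarith [abs_nonneg (⟪z, y⟫ - ⟪y, x⟫)]
  rw [abs_le] at hsum hdiff'
  constructor <;> rw [abs_le] <;> constructor <;> linarith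

lemma abs_sub_inner_succ_le_of_sum_sq_le {N : ℕ} (hN : 2 ≤ N) {v : ℕ → E}
    (hv : ∀ i ≤ N, ‖v i‖ = 1) {s K : ℝ} (hs : 1 / 2 ≤ s)
    (hK : ∑ i ∈ Finset.range (N - 1), ‖v (i + 2) - (2 * s) • v (i + 1) + v i‖ ^ 2 ≤ K) :
    ∀ j ≤ N - 1, |s - ⟪v (j + 1), v j⟫| ≤ 3 / 2 * Real.sqrt K := by
  have htriple : ∀ i < N - 1,
      |s - ⟪v (i + 1), v i⟫| ≤ 3 / 2 * Real.sqrt K ∧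
        |s - ⟪v (i + 2), v (i + 1)⟫| ≤ 3 / 2 * Real.sqrt K := by
    intro i hi
    have hterm : ‖v (i + 2) - (2 * s) • v (i + 1) + v i‖ ≤ Real.sqrt K := by
      refine Real.le_sqrt_of_sq_le (le_trans ?_ hK)
      exact Finset.single_le_sum (fun k _ => sq_nonneg ‖v (k + 2) - (2 * s) • v (k + 1) + v k‖) (Finset.mem_range.mpr hi)
    obtain ⟨h₁, h₂⟩ :=
      abs_sub_inner_le_of_unit_triple (hv i (by omega)) (hv (i + 1) (by omega))
        (hv (i + 2) (by omega)) hs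
    exact ⟨h₁.trans (by linarith), h₂.trans (by linarith)⟩
  intro j hj
  rcases Nat.lt_or_ge j (N - 1) with hj' | hj'
  · exact (htriple j hj').1
  · obtain ⟨i, rfl⟩ : ∃ i, j = i + 1 := ⟨N - 2, by omega⟩
    exact (htriple i (by omega)).2

end UnitTriple

theorem stmt7_general (C : ℝ) (hC : 0 < C)
    (δ : ℕ → ℝ) (hδ0 : Tendsto δ atTop (nhds 0))
    (μ : ℕ → ℝ) (hμ0 : Tendsto μ atTop (nhds 0))
    (Nn : ℕ → ℕ) (hN : ∀ n, 2 ≤ Nn n)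
    (u : ℕ → ℕ → EuclideanSpace ℝ (Fin 3)) (hu : ∀ n, ∀ i ≤ Nn n, ‖u n i‖ = 1)
    (hE : ∀ n, (1 / 2 : ℝ) * ∑ i ∈ Finset.range (Nn n - 1),
        ‖u n (i + 2) - (2 * (1 - δ n)) • u n (i + 1) + u n i‖ ^ 2 ≤ C * μ n) :
    (∃ C' : ℝ, 0 < C' ∧ ∃ n₀ : ℕ, ∀ n ≥ n₀, ∀ i ≤ Nn n - 1,
        |(1 - δ n) - ⟪u n (i + 1), u n i⟫| ≤ C' * Real.sqrt (μ n)) ∧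
    (∀ ε : ℝ, 0 < ε → ∃ n₁ : ℕ, ∀ n ≥ n₁, ∀ i ≤ Nn n - 1,
        |1 - ⟪u n (i + 1), u n i⟫| ≤ ε) := by
  set C' := 3 / 2 * Real.sqrt (2 * C)
  obtain ⟨n₀, hδ_small⟩ := eventually_atTop.mp
    (hδ0.eventually (eventually_le_nhds (by norm_num : (0 : ℝ) < 1 / 2)))
  have hbound : ∀ n ≥ n₀, ∀ i ≤ Nn n - 1,
      |(1 - δ n) - ⟪u n (i + 1), u n i⟫| ≤ C' * Real.sqrt (μ n) := by
    intro n hn i hi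
    have h := abs_sub_inner_succ_le_of_sum_sq_le (hN n) (hu n)
      (s := 1 - δ n) (K := 2 * C * μ n) (by linarith [hδ_small n hn]) (by linarith [hE n]) i hi
    rwa [Real.sqrt_mul (by positivity), ← mul_assoc] at h
  refine ⟨⟨C', by positivity, n₀, hbound⟩, fun ε hε => ?_⟩
  have hlim : Tendsto (fun n => C' * Real.sqrt (μ n) + |δ n|) atTop (nhds 0) := by
    simpa using ((hμ0.sqrt).const_mul C').add hδ0.abs
  obtain ⟨n₁, hn₁⟩ := eventually_atTop.mp (hlim.eventually (eventually_le_nhds hε))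
  refine ⟨max n₀ n₁, fun n hn i hi => ?_⟩
  calc |1 - ⟪u n (i + 1), u n i⟫| = |((1 - δ n) - ⟪u n (i + 1), u n i⟫) + δ n| := by ring_nf
    _ ≤ |(1 - δ n) - ⟪u n (i + 1), u n i⟫| + |δ n| := abs_add_le _ _
    _ ≤ ε := by linarith [hbound n (le_of_max_le_left hn) i hi, hn₁ n (le_of_max_le_right hn)]

/-- compactness estimate. If `H_{δ_n}(u_n) ≤ C μ_n` with `δ_n → 0`, `μ_n → 0`,
then eventually `|(1 − δ_n) − ⟨u_n^{i+1}, u_n^i⟩| ≤ C' √μ_n` uniformly in `i`; in particular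
`⟨u_n^{i+1}, u_n^i⟩ → 1` uniformly in `i`. -/
theorem stmt7 (C : ℝ) (hC : 0 < C)
    (δ : ℕ → ℝ) (hδ : ∀ n, δ n ∈ Set.Ioo (0 : ℝ) 1) (hδ0 : Tendsto δ atTop (nhds 0))
    (μ : ℕ → ℝ) (hμ : ∀ n, 0 < μ n) (hμ0 : Tendsto μ atTop (nhds 0))
    (Nn : ℕ → ℕ) (hN : ∀ n, 2 ≤ Nn n)
    (u : ℕ → ℕ → EuclideanSpace ℝ (Fin 3)) (hu : ∀ n, ∀ i ≤ Nn n, ‖u n i‖ = 1)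
    (hper : ∀ n, ⟪u n 1, u n 0⟫ = ⟪u n (Nn n), u n (Nn n - 1)⟫)
    (hE : ∀ n, (1 / 2 : ℝ) * ∑ i ∈ Finset.range (Nn n - 1),
        ‖u n (i + 2) - (2 * (1 - δ n)) • u n (i + 1) + u n i‖ ^ 2 ≤ C * μ n) :
    (∃ C' : ℝ, 0 < C' ∧ ∃ n₀ : ℕ, ∀ n ≥ n₀, ∀ i ≤ Nn n - 1,
        |(1 - δ n) - ⟪u n (i + 1), u n i⟫| ≤ C' * Real.sqrt (μ n)) ∧
    (∀ ε : ℝ, 0 < ε → ∃ n₁ : ℕ, ∀ n ≥ n₁, ∀ i ≤ Nn n - 1,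
        |1 - ⟪u n (i + 1), u n i⟫| ≤ ε) :=
  stmt7_general C hC δ hδ0 μ hμ0 Nn hN u hu hE
end

section
/- Let q ∈ S², let G : ℝ³ → [0,∞) be Borel measurable, and suppose c > 0 satisfies √(G(x)/2) ≥ c for every x ∈ ℝ³ with ‖x − q‖ ≥ 1/4, ‖x + q‖ ≥ 1/4 and ‖x‖ ≥ 1/2. Then for every continuously differentiable w : ℝ → ℝ³ with w(t) → −q as t → −∞ and w(t) → q as t → +∞, one has ∫_ℝ [(‖w(t)‖² − 1)² + G(w(t))/2 + ‖w'(t)‖²] dt ≥ c/2 (the integral of the nonnegative integrand, possibly +∞). In particular, for such G the transition energy between q and −q is strictly positive. -/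
open MeasureTheory Filter Set

/-!
Once `w` has come within `1` of `-q`, let `b` be the first later time at which it enters the ball
`B(q, 1/4)`, and `a` the last time before `b` at which `‖w - q‖ ≥ 1/2`. On `(a, b)` the path stays
in the annulus `1/4 ≤ ‖x - q‖ ≤ 1/2`, which lies in the region where `G/2 ≥ c²`; there the energy
density is at least `c² + ‖w'‖² ≥ 2c‖w'‖`. Since `w` travels a distance at least `1/4` between
`a` and `b`, the energy is at least `2c · 1/4`.
-/

lemma two_mul_norm_le_norm_sub_add_norm_add {E : Type*} [NormedAddCommGroup E]
    [NormedSpace ℝ E] (x q : E) : 2 * ‖q‖ ≤ ‖x - q‖ + ‖x + q‖ :=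
  calc 2 * ‖q‖ = ‖(x + q) - (x - q)‖ := by
        rw [show (x + q) - (x - q) = (2 : ℝ) • q by module, norm_smul, Real.norm_two]
    _ ≤ ‖x + q‖ + ‖x - q‖ := norm_sub_le _ _
    _ = ‖x - q‖ + ‖x + q‖ := add_comm _ _

lemma Continuous.exists_lt_mapsTo_Ioo_Icc {f : ℝ → ℝ} (hf : Continuous f) {S T r s : ℝ}
    (hST : S ≤ T) (hrs : r < s) (hS : s ≤ f S) (hT : f T ≤ r) :
    ∃ a b, a < b ∧ s ≤ f a ∧ f b ≤ r ∧ MapsTo f (Ioo a b) (Icc r s) := by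
  set B := {t | S ≤ t ∧ f t ≤ r}
  have hBbdd : BddBelow B := ⟨S, fun t ht => ht.1⟩
  have hb : sInf B ∈ B :=
    ((isClosed_le continuous_const continuous_id).inter (isClosed_le hf continuous_const)).csInf_mem
      ⟨T, hST, hT⟩ hBbdd
  set A := {t | t ≤ sInf B ∧ s ≤ f t}
  have hAbdd : BddAbove A := ⟨sInf B, fun t ht => ht.1⟩
  have hSA : S ∈ A := ⟨hb.1, hS⟩
  have ha : sSup A ∈ A :=
    ((isClosed_le continuous_id continuous_const).inter (isClosed_le continuous_const hf)).csSup_mem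
      ⟨S, hSA⟩ hAbdd
  have hab : sSup A < sInf B :=
    ha.1.lt_of_ne fun h => by linarith [h ▸ ha.2, hb.2]
  refine ⟨sSup A, sInf B, hab, ha.2, hb.2, fun t ht => ⟨?_, ?_⟩⟩
  · by_contra! h
    exact (csInf_le hBbdd ⟨(le_csSup hAbdd hSA).trans ht.1.le, h.le⟩).not_gt ht.2
  · by_contra! h
    exact (le_csSup hAbdd ⟨ht.2.le, h.le⟩).not_gt ht.1

lemma ofReal_mul_norm_sub_le_lintegral {E : Type*} [NormedAddCommGroup E] [NormedSpace ℝ E]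
    {w : ℝ → E} (hw : ContDiff ℝ 1 w) {F : ℝ → ℝ} {a b c : ℝ} (hab : a ≤ b) (hc : 0 ≤ c)
    (hF : ∀ t ∈ Ioo a b, c * ‖deriv w t‖ ≤ F t) :
    ENNReal.ofReal (c * ‖w b - w a‖) ≤ ∫⁻ t, ENNReal.ofReal (F t) := by
  have hspeed : Continuous fun t => c * ‖deriv w t‖ :=
    continuous_const.mul (hw.continuous_deriv le_rfl).norm
  have hdisp : ‖w b - w a‖ ≤ ∫ t in Ioo a b, ‖deriv w t‖ := by
    rw [integral_Ioc_eq_integral_Ioo.symm, ← intervalIntegral.integral_of_le hab]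
    exact norm_sub_le_integral_of_norm_deriv_le_of_le hab hw.continuous.continuousOn
      (hw.differentiable one_ne_zero).differentiableOn (ae_of_all _ fun _ _ => le_rfl)
      ((hw.continuous_deriv le_rfl).norm.intervalIntegrable _ _)
  calc ENNReal.ofReal (c * ‖w b - w a‖)
      ≤ ENNReal.ofReal (∫ t in Ioo a b, c * ‖deriv w t‖) := by
        rw [integral_const_mul]
        gcongr
    _ = ∫⁻ t in Ioo a b, ENNReal.ofReal (c * ‖deriv w t‖) :=
        ofReal_integral_eq_lintegral_ofReal (hspeed.integrableOn_Icc.mono_set Ioo_subset_Icc_self)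
          (ae_of_all _ fun t => by positivity)
    _ ≤ ∫⁻ t in Ioo a b, ENNReal.ofReal (F t) :=
        setLIntegral_mono' measurableSet_Ioo fun t ht => ENNReal.ofReal_le_ofReal (hF t ht)
    _ ≤ ∫⁻ t, ENNReal.ofReal (F t) := setLIntegral_le_lintegral _ _

theorem stmt10_general (q : EuclideanSpace ℝ (Fin 3)) (hq : ‖q‖ = 1)
    (G : EuclideanSpace ℝ (Fin 3) → ℝ)
    (c : ℝ) (hc : 0 < c)
    (hcG : ∀ x : EuclideanSpace ℝ (Fin 3),
      1 / 4 ≤ ‖x - q‖ → 1 / 4 ≤ ‖x + q‖ → 1 / 2 ≤ ‖x‖ → c ≤ Real.sqrt (G x / 2))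
    (w : ℝ → EuclideanSpace ℝ (Fin 3)) (hw : ContDiff ℝ 1 w)
    (hbot : Tendsto w atBot (nhds (-q))) (htop : Tendsto w atTop (nhds q)) :
    ENNReal.ofReal (c / 2)
      ≤ ∫⁻ t : ℝ, ENNReal.ofReal ((‖w t‖ ^ 2 - 1) ^ 2 + G (w t) / 2 + ‖deriv w t‖ ^ 2) := by
  obtain ⟨S, hS⟩ : ∃ S, ‖w S + q‖ < 1 := by
    simpa [dist_eq_norm] using (hbot.eventually (Metric.ball_mem_nhds (-q) one_pos)).exists
  obtain ⟨T, hT, hST⟩ : ∃ T, ‖w T - q‖ < 1 / 4 ∧ S ≤ T := by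
    simpa [dist_eq_norm] using ((htop.eventually (Metric.ball_mem_nhds q (by norm_num))).and
      (eventually_ge_atTop S)).exists
  have hfS : 1 / 2 ≤ ‖w S - q‖ := by linarith [two_mul_norm_le_norm_sub_add_norm_add (w S) q]
  have hdist : Continuous fun t => ‖w t - q‖ := by fun_prop
  obtain ⟨a, b, hab, ha, hb, hannulus⟩ :=
    hdist.exists_lt_mapsTo_Ioo_Icc hST (by norm_num : (1 / 4 : ℝ) < 1 / 2) hfS hT.le
  have hdisp : 1 / 4 ≤ ‖w b - w a‖ := by
    linarith [norm_sub_le_norm_sub_add_norm_sub (w a) (w b) q, norm_sub_rev (w a) (w b)]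
  have hdensity : ∀ t ∈ Ioo a b,
      2 * c * ‖deriv w t‖ ≤ (‖w t‖ ^ 2 - 1) ^ 2 + G (w t) / 2 + ‖deriv w t‖ ^ 2 := by
    intro t ht
    obtain ⟨hfar, hnear⟩ := hannulus ht
    have hG : c ^ 2 ≤ G (w t) / 2 := (Real.le_sqrt' hc).1 <| hcG _ hfar
      (by linarith [two_mul_norm_le_norm_sub_add_norm_add (w t) q])
      (by linarith [norm_le_norm_add_norm_sub (w t) q])
    nlinarith [sq_nonneg (c - ‖deriv w t‖), sq_nonneg (‖w t‖ ^ 2 - 1)]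
  calc ENNReal.ofReal (c / 2) ≤ ENNReal.ofReal (2 * c * ‖w b - w a‖) :=
        ENNReal.ofReal_le_ofReal (by nlinarith)
    _ ≤ _ := ofReal_mul_norm_sub_le_lintegral hw hab.le (by positivity) hdensity

/-- if `√(G/2) ≥ c` away from `±q` and away from the ball of radius `1/2`,
then any `C¹` chirality profile connecting `−q` to `q` has penalized energy at least `c/2`;
in particular the soft-penalized transition energy between `q` and `−q` is positive. -/
theorem stmt10 (q : EuclideanSpace ℝ (Fin 3)) (hq : ‖q‖ = 1)
    (G : EuclideanSpace ℝ (Fin 3) → ℝ) (hGnn : ∀ x, 0 ≤ G x) (hGmeas : Measurable G)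
    (c : ℝ) (hc : 0 < c)
    (hcG : ∀ x : EuclideanSpace ℝ (Fin 3),
      1 / 4 ≤ ‖x - q‖ → 1 / 4 ≤ ‖x + q‖ → 1 / 2 ≤ ‖x‖ → c ≤ Real.sqrt (G x / 2))
    (w : ℝ → EuclideanSpace ℝ (Fin 3)) (hw : ContDiff ℝ 1 w)
    (hbot : Tendsto w atBot (nhds (-q))) (htop : Tendsto w atTop (nhds q)) :
    ENNReal.ofReal (c / 2)
      ≤ ∫⁻ t : ℝ, ENNReal.ofReal ((‖w t‖ ^ 2 - 1) ^ 2 + G (w t) / 2 + ‖deriv w t‖ ^ 2) :=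
  stmt10_general q hq G c hc hcG w hw hbot htop
end
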